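/- arXiv:1702.02866 — 2 statements merged into one kernel-verified Lean document; each statement's English description precedes it below -/
import Mathlib

section
/- Let K ∈ 𝒦 with level values k_j and set α_l = 2^{-l}(k_{-l} − k_{-l+1}) for l ∈ ℤ. Then Σ_{l∈ℤ} |α_l| < ∞, Σ_{l∈ℤ} α_l = 1, and the function φ(s) = Σ_{l∈ℤ} α_l 2^l χ_{(0,2^{-l}]}(s) (s > 0) satisfies φ(δ(x,y)) = K(x,y) for all x ≠ y in ℝ⁺, ∫_0^∞ |φ(s)| ds < ∞, and ∫_0^∞ φ(s) ds = 1. -/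
open MeasureTheory Set Filter

/-- The dyadic distance on ℝ⁺: the infimum of the lengths of the dyadic
intervals `[k·2^{-j}, (k+1)·2^{-j})` containing both points (and `0` on the diagonal). -/
noncomputable def dyadicDist (x y : ℝ) : ℝ :=
  if x = y then 0
  else sInf {r : ℝ | ∃ (j : ℤ) (k : ℕ), r = (2:ℝ) ^ (-j) ∧
    x ∈ Set.Ico ((k : ℝ) * (2:ℝ) ^ (-j)) (((k : ℝ) + 1) * (2:ℝ) ^ (-j)) ∧
    y ∈ Set.Ico ((k : ℝ) * (2:ℝ) ^ (-j)) (((k : ℝ) + 1) * (2:ℝ) ^ (-j))}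

/-- The sequence `α_l = 2^{-l}(k_{-l} - k_{-l+1})` associated to the level values `k` of a
kernel in `𝒦`. -/
noncomputable def alphaOf (k : ℤ → ℝ) (l : ℤ) : ℝ :=
  (2:ℝ) ^ (-l) * (k (-l) - k (-l + 1))

/-- The profile `φ(s) = Σ_{l∈ℤ} α_l 2^l χ_{(0,2^{-l}]}(s)` associated to the level values `k`. -/
noncomputable def phiOf (k : ℤ → ℝ) (s : ℝ) : ℝ :=
  ∑' l : ℤ, alphaOf k l * ((2:ℝ) ^ l * (if s ∈ Set.Ioc (0:ℝ) ((2:ℝ) ^ (-l)) then 1 else 0))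

/-- The sequence `Λ_j = Σ_{l>j} α_l` associated to the level values `k`. -/
noncomputable def LambdaOf (k : ℤ → ℝ) (j : ℤ) : ℝ :=
  ∑' m : ℕ, alphaOf k (j + 1 + m)

/-- The Haar function `h^j_k(x) = 2^{j/2}(χ_{[0,1/2)} - χ_{[1/2,1)})(2^j x - k)`,
supported in the dyadic interval `I^j_k = [k·2^{-j},(k+1)·2^{-j})`. -/
noncomputable def haarFn (j : ℤ) (k : ℕ) (x : ℝ) : ℝ :=
  (2:ℝ) ^ ((j : ℝ) / 2) *
    (if (2:ℝ) ^ j * x - (k : ℝ) ∈ Set.Ico (0:ℝ) (1/2) then 1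
     else if (2:ℝ) ^ j * x - (k : ℝ) ∈ Set.Ico (1/2 : ℝ) 1 then -1 else 0)

open Topology Function

/-! For `x₀ ≥ 0`, the dyadic sphere `{y : δ(x₀, y) = 2^m}` is the dyadic interval of length
`2^m` containing `x₀` minus its half containing `x₀`, so it has measure `2^(m-1)` and the
normalization of `K` reads `Σ_m β_m = 1` with `β_m = 2^(m-1) k_m` (`levelMass`). Since
`α_l = 2 β_{-l} - β_{-l+1}`, the `α_l` are (absolutely) summable with sum `2 - 1 = 1`. On the
shell `(2^(m-1), 2^m]` the series defining `φ` telescopes to `k_m - lim k = k_m` (and `k_m → 0`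
because `β_m → 0`), so `φ(δ(x, y)) = K(x, y)`, and integrating `φ` shell by shell gives
`Σ_m β_m = 1` once more. -/

-- `I^j_c`, written so that it is definitionally the interval inside `dyadicDist`
def dyadicInterval (j : ℤ) (c : ℕ) : Set ℝ :=
  Ico ((c : ℝ) * (2:ℝ) ^ (-j)) (((c : ℝ) + 1) * (2:ℝ) ^ (-j))

noncomputable def dyadicIndex (j : ℤ) (x : ℝ) : ℕ := ⌊(2:ℝ) ^ j * x⌋₊

section DyadicGeometry

variable {x y : ℝ}

lemma mem_dyadicInterval_iff {j : ℤ} {c : ℕ} :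
    x ∈ dyadicInterval j c ↔ 0 ≤ x ∧ dyadicIndex j x = c := by
  have hp : (0:ℝ) < 2 ^ j := zpow_pos two_pos j
  have hdiv (a : ℝ) : a * (2:ℝ) ^ (-j) = a / 2 ^ j := by rw [zpow_neg, div_eq_mul_inv]
  simp only [dyadicInterval, mem_Ico, hdiv, div_le_iff₀ hp, lt_div_iff₀ hp, dyadicIndex]
  constructor
  · rintro ⟨hc, hc1⟩
    have hx : 0 ≤ x := nonneg_of_mul_nonneg_left ((Nat.cast_nonneg c).trans hc) hp
    exact ⟨hx, (Nat.floor_eq_iff (by positivity)).2 ⟨by linarith, by linarith⟩⟩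
  · rintro ⟨hx, rfl⟩
    have := (Nat.floor_eq_iff (mul_nonneg hp.le hx)).1 rfl
    constructor <;> linarith

lemma volume_dyadicInterval (j : ℤ) (c : ℕ) :
    volume (dyadicInterval j c) = ENNReal.ofReal ((2:ℝ) ^ (-j)) := by
  rw [dyadicInterval, Real.volume_Ico]
  ring_nf

lemma dyadicIndex_sub_one (j : ℤ) (x : ℝ) :
    dyadicIndex (j - 1) x = dyadicIndex j x / 2 := by
  rw [dyadicIndex, dyadicIndex, ← Nat.floor_div_ofNat, zpow_sub₀ two_ne_zero, zpow_one,
    div_mul_eq_mul_div]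

lemma dyadicIndex_eq_of_le {i j : ℤ} (hij : i ≤ j) (h : dyadicIndex j x = dyadicIndex j y) :
    dyadicIndex i x = dyadicIndex i y := by
  induction i, hij using Int.leInductionDown with
  | base => exact h
  | pred i _ ih => rw [dyadicIndex_sub_one, dyadicIndex_sub_one, ih]

lemma exists_dyadicIndex_eq (hx : 0 ≤ x) (hy : 0 ≤ y) :
    ∃ j, dyadicIndex j x = dyadicIndex j y := by
  obtain ⟨n, hn⟩ := pow_unbounded_of_one_lt (max x y) one_lt_two
  have hzero {z : ℝ} (hz : 0 ≤ z) (hzn : z ≤ max x y) : dyadicIndex (-n) z = 0 := by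
    rw [dyadicIndex, Nat.floor_eq_zero, zpow_neg, zpow_natCast, inv_mul_lt_iff₀ (by positivity),
      mul_one]
    exact hzn.trans_lt hn
  exact ⟨-n, by rw [hzero hx (le_max_left x y), hzero hy (le_max_right x y)]⟩

lemma bddAbove_dyadicIndex_eq (hx : 0 ≤ x) (hy : 0 ≤ y) (hxy : x ≠ y) :
    BddAbove {j | dyadicIndex j x = dyadicIndex j y} := by
  obtain ⟨n, hn⟩ := pow_unbounded_of_one_lt |x - y|⁻¹ one_lt_two
  refine ⟨n, fun j (hj : dyadicIndex j x = dyadicIndex j y) => ?_⟩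
  by_contra! hnj
  have hp : (0:ℝ) < 2 ^ j := zpow_pos two_pos j
  have hclose : |2 ^ j * x - 2 ^ j * y| < 1 := by
    refine Int.abs_sub_lt_one_of_floor_eq_floor ?_
    rw [← Int.natCast_floor_eq_floor (by positivity),
      ← Int.natCast_floor_eq_floor (by positivity)]
    exact congrArg Nat.cast hj
  rw [← mul_sub, abs_mul, abs_of_pos hp] at hclose
  have hle : (2:ℝ) ^ n ≤ 2 ^ j := by
    rw [← zpow_natCast]
    exact zpow_le_zpow_right₀ one_le_two hnj.le
  have hd : 0 < |x - y| := abs_pos.2 (sub_ne_zero.2 hxy)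
  have := (inv_lt_iff_one_lt_mul₀ hd).1 (hn.trans_le hle)
  linarith [mul_comm |x - y| ((2:ℝ) ^ j)]

lemma dyadicDist_eq_of_isGreatest (hx : 0 ≤ x) (hy : 0 ≤ y) (hxy : x ≠ y) {j₀ : ℤ}
    (h : IsGreatest {j | dyadicIndex j x = dyadicIndex j y} j₀) :
    dyadicDist x y = (2:ℝ) ^ (-j₀) := by
  rw [dyadicDist, if_neg hxy]
  refine IsLeast.csInf_eq ⟨⟨j₀, dyadicIndex j₀ x, rfl, ?_, ?_⟩, ?_⟩
  · exact mem_dyadicInterval_iff.2 ⟨hx, rfl⟩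
  · exact mem_dyadicInterval_iff.2 ⟨hy, h.1.symm⟩
  · rintro r ⟨j, c, rfl, hxc, hyc⟩
    have hj : j ≤ j₀ :=
      h.2 ((mem_dyadicInterval_iff.1 hxc).2.trans (mem_dyadicInterval_iff.1 hyc).2.symm)
    exact zpow_le_zpow_right₀ one_le_two (neg_le_neg hj)

lemma exists_isGreatest_dyadicIndex_eq (hx : 0 ≤ x) (hy : 0 ≤ y) (hxy : x ≠ y) :
    ∃ j₀, IsGreatest {j | dyadicIndex j x = dyadicIndex j y} j₀ :=
  Int.exists_greatest_of_bdd (bddAbove_dyadicIndex_eq hx hy hxy) (exists_dyadicIndex_eq hx hy)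

lemma exists_dyadicDist_eq_zpow (hx : 0 ≤ x) (hy : 0 ≤ y) (hxy : x ≠ y) :
    ∃ m : ℤ, dyadicDist x y = (2:ℝ) ^ m := by
  obtain ⟨j₀, hj₀⟩ := exists_isGreatest_dyadicIndex_eq hx hy hxy
  exact ⟨-j₀, dyadicDist_eq_of_isGreatest hx hy hxy hj₀⟩

lemma dyadicDist_eq_zpow_iff (hx : 0 ≤ x) (hy : 0 ≤ y) (hxy : x ≠ y) (m : ℤ) :
    dyadicDist x y = (2:ℝ) ^ m ↔
      dyadicIndex (-m) x = dyadicIndex (-m) y ∧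
        dyadicIndex (-m + 1) x ≠ dyadicIndex (-m + 1) y := by
  constructor
  · intro hm
    obtain ⟨j₀, hj₀⟩ := exists_isGreatest_dyadicIndex_eq hx hy hxy
    rw [dyadicDist_eq_of_isGreatest hx hy hxy hj₀] at hm
    obtain rfl : j₀ = -m := by
      have := zpow_right_injective₀ two_pos (by norm_num : (2:ℝ) ≠ 1) hm
      omega
    exact ⟨hj₀.1, fun h => by have := hj₀.2 h; omega⟩
  · rintro ⟨heq, hne⟩
    have hgreatest : IsGreatest {j | dyadicIndex j x = dyadicIndex j y} (-m) :=
      ⟨heq, fun j hj => not_lt.1 fun hlt => hne (dyadicIndex_eq_of_le (by omega) hj)⟩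
    rw [dyadicDist_eq_of_isGreatest hx hy hxy hgreatest, neg_neg]

end DyadicGeometry

lemma two_zpow_sub_two_zpow_sub_one (m : ℤ) : (2:ℝ) ^ m - 2 ^ (m - 1) = 2 ^ (m - 1) := by
  rw [zpow_sub₀ two_ne_zero, zpow_one]
  ring

lemma setIntegral_eq_mul_of_eqOn_const {X : Type*} [MeasurableSpace X] {μ : Measure X}
    {f : X → ℝ} {s : Set X} {w c : ℝ} (hs : MeasurableSet s) (hw : 0 ≤ w)
    (hμs : μ s = ENNReal.ofReal w) (hf : EqOn f (fun _ => c) s) :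
    ∫ x in s, f x ∂μ = w * c := by
  rw [setIntegral_congr_fun hs hf, setIntegral_const, measureReal_def, hμs,
    ENNReal.toReal_ofReal hw, smul_eq_mul]

def dyadicSphere (x₀ : ℝ) (m : ℤ) : Set ℝ :=
  {y | 0 ≤ y ∧ y ≠ x₀ ∧ dyadicDist x₀ y = (2:ℝ) ^ m}

section DyadicSphere

variable {x₀ : ℝ}

lemma dyadicSphere_eq_sdiff (hx₀ : 0 ≤ x₀) (m : ℤ) :
    dyadicSphere x₀ m = dyadicInterval (-m) (dyadicIndex (-m) x₀) \
      dyadicInterval (-m + 1) (dyadicIndex (-m + 1) x₀) := by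
  ext y
  simp only [dyadicSphere, mem_ofPred_eq, Set.mem_sdiff, mem_dyadicInterval_iff]
  constructor
  · rintro ⟨hy, hne, hd⟩
    obtain ⟨h, h'⟩ := (dyadicDist_eq_zpow_iff hx₀ hy hne.symm m).1 hd
    exact ⟨⟨hy, h.symm⟩, fun h'' => h' h''.2.symm⟩
  · rintro ⟨⟨hy, h⟩, h'⟩
    have hne : y ≠ x₀ := by
      rintro rfl
      exact h' ⟨hy, rfl⟩
    refine ⟨hy, hne, (dyadicDist_eq_zpow_iff hx₀ hy hne.symm m).2 ⟨h.symm, fun h'' => ?_⟩⟩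
    exact h' ⟨hy, h''.symm⟩

lemma measurableSet_dyadicSphere (hx₀ : 0 ≤ x₀) (m : ℤ) :
    MeasurableSet (dyadicSphere x₀ m) := by
  rw [dyadicSphere_eq_sdiff hx₀]
  exact measurableSet_Ico.diff measurableSet_Ico

lemma volume_dyadicSphere (hx₀ : 0 ≤ x₀) (m : ℤ) :
    volume (dyadicSphere x₀ m) = ENNReal.ofReal ((2:ℝ) ^ (m - 1)) := by
  have hsub : dyadicInterval (-m + 1) (dyadicIndex (-m + 1) x₀) ⊆
      dyadicInterval (-m) (dyadicIndex (-m) x₀) := fun y hy => by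
    obtain ⟨hy, h⟩ := mem_dyadicInterval_iff.1 hy
    exact mem_dyadicInterval_iff.2 ⟨hy, dyadicIndex_eq_of_le (by omega) h⟩
  rw [dyadicSphere_eq_sdiff hx₀, measure_sdiff hsub measurableSet_Ico.nullMeasurableSet
    (by rw [volume_dyadicInterval]; exact ENNReal.ofReal_ne_top), volume_dyadicInterval,
    volume_dyadicInterval, ← ENNReal.ofReal_sub _ (by positivity), neg_add', neg_neg,
    two_zpow_sub_two_zpow_sub_one]

lemma pairwise_disjoint_dyadicSphere (x₀ : ℝ) : Pairwise (Disjoint on dyadicSphere x₀) :=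
  fun _ _ hmm' => Set.disjoint_left.2 fun _ hm hm' =>
    hmm' (zpow_right_injective₀ two_pos (by norm_num : (2:ℝ) ≠ 1) (hm.2.2.symm.trans hm'.2.2))

lemma iUnion_dyadicSphere (hx₀ : 0 ≤ x₀) : ⋃ m, dyadicSphere x₀ m = Ici 0 \ {x₀} := by
  ext y
  simp only [dyadicSphere, mem_iUnion, mem_ofPred_eq, Set.mem_sdiff, mem_Ici, mem_singleton_iff]
  constructor
  · rintro ⟨m, hy, hne, -⟩
    exact ⟨hy, hne⟩
  · rintro ⟨hy, hne⟩
    obtain ⟨m, hm⟩ := exists_dyadicDist_eq_zpow hx₀ hy (Ne.symm hne)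
    exact ⟨m, hy, hne, hm⟩

end DyadicSphere

-- the mass of `K(x₀, ·)` on the dyadic sphere of radius `2^m`, which has measure `2^(m-1)`
noncomputable def levelMass (k : ℤ → ℝ) (m : ℤ) : ℝ := (2:ℝ) ^ (m - 1) * k m

lemma hasSum_levelMass {K : ℝ → ℝ → ℝ} {k : ℤ → ℝ} {x₀ : ℝ} (hx₀ : 0 ≤ x₀)
    (hKnorm : (∫ y in Ici (0:ℝ), K x₀ y) = 1)
    (hk : ∀ (j : ℤ) (x y : ℝ), 0 ≤ x → 0 ≤ y → dyadicDist x y = (2:ℝ) ^ j →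
      K x y = k j) :
    HasSum (levelMass k) 1 := by
  have hint : IntegrableOn (K x₀) (Ici 0) := .of_integral_ne_zero (hKnorm ▸ one_ne_zero)
  have hae : (⋃ m, dyadicSphere x₀ m) =ᵐ[volume] Ici (0:ℝ) := by
    rw [iUnion_dyadicSphere hx₀]
    exact sdiff_null_ae_eq_self (measure_singleton x₀)
  have hsum := hasSum_integral_iUnion (measurableSet_dyadicSphere hx₀)
    (pairwise_disjoint_dyadicSphere x₀) (hint.congr_set_ae hae)
  rw [setIntegral_congr_set hae, hKnorm] at hsum
  refine hsum.congr_fun fun m => (setIntegral_eq_mul_of_eqOn_const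
    (measurableSet_dyadicSphere hx₀ m) (by positivity) (volume_dyadicSphere hx₀ m) ?_).symm
  rintro y ⟨hy, -, hd⟩
  exact hk m x₀ y hx₀ hy hd

section LevelMass

variable {k : ℤ → ℝ}

lemma alphaOf_eq_levelMass (l : ℤ) :
    alphaOf k l = 2 * levelMass k (-l) - levelMass k (-l + 1) := by
  rw [alphaOf, levelMass, levelMass, add_sub_cancel_right, zpow_sub₀ two_ne_zero, zpow_one]
  ring

lemma hasSum_alphaOf {a : ℝ} (h : HasSum (levelMass k) a) : HasSum (alphaOf k) a := by
  have h₁ : HasSum (fun l : ℤ => levelMass k (-l)) a := (Equiv.neg ℤ).hasSum_iff.2 h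
  have h₂ : HasSum (fun l : ℤ => levelMass k (-l + 1)) a := by
    refine ((Equiv.subLeft (1:ℤ)).hasSum_iff.2 h).congr_fun fun l => ?_
    rw [neg_add_eq_sub]
    rfl
  have h₃ := (h₁.mul_left 2).sub h₂
  rw [two_mul, add_sub_cancel_right] at h₃
  exact h₃.congr_fun alphaOf_eq_levelMass

lemma tendsto_zero_of_summable_levelMass (h : Summable (levelMass k)) :
    Tendsto k atTop (𝓝 0) := by
  refine squeeze_zero_norm' ?_
    (tendsto_norm_zero.comp (h.tendsto_cofinite_zero.mono_left atTop_le_cofinite))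
  filter_upwards [eventually_ge_atTop 1] with m hm
  rw [comp_apply, levelMass, norm_mul, Real.norm_of_nonneg (zpow_pos two_pos _).le]
  exact le_mul_of_one_le_left (norm_nonneg _) (one_le_zpow₀ one_le_two (by omega))

end LevelMass

lemma hasSum_sub_succ_of_tendsto_zero {E : Type*} [NormedAddCommGroup E] {u : ℕ → E}
    (hs : Summable fun n => u n - u (n + 1)) (hu : Tendsto u atTop (𝓝 0)) :
    HasSum (fun n => u n - u (n + 1)) (u 0) := by
  refine hs.hasSum_iff_tendsto_nat.2 ?_
  simp only [Finset.sum_range_sub']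
  simpa using tendsto_const_nhds.sub hu

lemma mem_Ioc_zero_two_zpow_neg_iff {m : ℤ} {s : ℝ} (hs : s ∈ Ioc ((2:ℝ) ^ (m - 1)) (2 ^ m))
    (l : ℤ) : s ∈ Ioc (0:ℝ) (2 ^ (-l)) ↔ l ≤ -m := by
  rw [mem_Ioc, and_iff_right ((zpow_pos two_pos _).trans hs.1)]
  constructor
  · intro h
    have := (zpow_lt_zpow_iff_right₀ one_lt_two).1 (hs.1.trans_le h)
    omega
  · exact fun h => hs.2.trans (zpow_le_zpow_right₀ one_le_two (by omega))

lemma phiOf_eq_of_mem_Ioc {k : ℤ → ℝ} (hα : Summable (alphaOf k))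
    (hk : Tendsto k atTop (𝓝 0)) {m : ℤ} {s : ℝ}
    (hs : s ∈ Ioc ((2:ℝ) ^ (m - 1)) (2 ^ m)) :
    phiOf k s = k m := by
  have hmem := mem_Ioc_zero_two_zpow_neg_iff hs
  set F : ℤ → ℝ := fun l =>
    alphaOf k l * ((2:ℝ) ^ l * (if s ∈ Ioc (0:ℝ) ((2:ℝ) ^ (-l)) then 1 else 0))
  have hF (l : ℤ) : F l = if l ≤ -m then k (-l) - k (-l + 1) else 0 := by
    simp only [F, hmem, alphaOf]
    split_ifs
    · rw [zpow_neg]; field_simp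
    · simp
  -- only the terms with `l = -m - n`, `n : ℕ`, survive, and they telescope
  let g : ℕ → ℤ := fun n => -m - n
  have hg : Injective g := fun a b h => by simpa [g] using h
  have hoff : ∀ l ∉ range g, F l = 0 := fun l hl => by
    rw [hF, if_neg]
    exact fun h => hl ⟨(-m - l).toNat, by simp only [g]; omega⟩
  have hFg : F ∘ g = fun n : ℕ => k (m + n) - k (m + (n + 1 : ℕ)) := by
    funext n
    simp only [comp_apply, hF, g, if_pos (show -m - (n:ℤ) ≤ -m by omega)]
    congr 2 <;> push_cast <;> ring
  have hFsum : Summable F := by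
    refine Summable.of_norm_bounded ((summable_abs_iff.2 hα).mul_left ((2:ℝ) ^ (-m)))
      fun l => ?_
    simp only [F, norm_mul, Real.norm_eq_abs, abs_zpow, abs_two]
    split_ifs with h
    · rw [abs_one, mul_one, mul_comm]
      exact mul_le_mul_of_nonneg_right
        (zpow_le_zpow_right₀ one_le_two ((hmem l).1 h)) (abs_nonneg _)
    · simp only [abs_zero, mul_zero]
      positivity
  have hu : Tendsto (fun n : ℕ => k (m + n)) atTop (𝓝 0) :=
    hk.comp (tendsto_atTop_add_const_left _ _ tendsto_natCast_atTop_atTop)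
  have := hasSum_sub_succ_of_tendsto_zero (hFg ▸ hFsum.comp_injective hg) hu
  rw [phiOf, ((hg.hasSum_iff hoff).1 (hFg ▸ this)).tsum_eq, Nat.cast_zero, add_zero]

lemma Ioi_zero_eq_iUnion_Ioc_two_zpow :
    Ioi (0:ℝ) = ⋃ m : ℤ, Ioc ((2:ℝ) ^ (m - 1)) (2 ^ m) := by
  ext s
  simp only [mem_Ioi, mem_iUnion]
  constructor
  · intro hs
    obtain ⟨n, hn⟩ := exists_mem_Ioc_zpow hs one_lt_two
    exact ⟨n + 1, by rwa [add_sub_cancel_right]⟩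
  · rintro ⟨m, hm, -⟩
    exact (zpow_pos two_pos _).trans hm

lemma pairwise_disjoint_Ioc_two_zpow :
    Pairwise (Disjoint on fun m : ℤ => Ioc ((2:ℝ) ^ (m - 1)) (2 ^ m)) := by
  simpa only [Order.pred_eq_sub_one] using
    (zpow_right_mono₀ one_le_two :
      Monotone fun m : ℤ => (2:ℝ) ^ m).pairwise_disjoint_on_Ioc_pred

lemma volume_Ioc_two_zpow (m : ℤ) :
    volume (Ioc ((2:ℝ) ^ (m - 1)) (2 ^ m)) = ENNReal.ofReal ((2:ℝ) ^ (m - 1)) := by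
  rw [Real.volume_Ioc, two_zpow_sub_two_zpow_sub_one]

section Profile

variable {k : ℤ → ℝ}

lemma eqOn_phiOf_Ioc_two_zpow (hβ : Summable (levelMass k)) (m : ℤ) :
    EqOn (phiOf k) (fun _ => k m) (Ioc ((2:ℝ) ^ (m - 1)) (2 ^ m)) := fun _ hs =>
  phiOf_eq_of_mem_Ioc (hasSum_alphaOf hβ.hasSum).summable
    (tendsto_zero_of_summable_levelMass hβ) hs

lemma integrableOn_phiOf (hβ : Summable (levelMass k)) : IntegrableOn (phiOf k) (Ioi 0) := by
  have hint (m : ℤ) : IntegrableOn (phiOf k) (Ioc ((2:ℝ) ^ (m - 1)) (2 ^ m)) := by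
    rw [integrableOn_congr_fun (eqOn_phiOf_Ioc_two_zpow hβ m) measurableSet_Ioc]
    exact integrableOn_const (by rw [volume_Ioc_two_zpow]; exact ENNReal.ofReal_ne_top)
  have hnorm (m : ℤ) :
      ∫ s in Ioc ((2:ℝ) ^ (m - 1)) (2 ^ m), ‖phiOf k s‖ = |levelMass k m| := by
    have heq : EqOn (fun s => ‖phiOf k s‖) (fun _ => |k m|) (Ioc ((2:ℝ) ^ (m - 1)) (2 ^ m)) :=
      fun s hs => by
        dsimp only
        rw [eqOn_phiOf_Ioc_two_zpow hβ m hs, Real.norm_eq_abs]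
    rw [setIntegral_eq_mul_of_eqOn_const measurableSet_Ioc (zpow_pos two_pos _).le
      (volume_Ioc_two_zpow m) heq, levelMass, abs_mul, abs_zpow, abs_two]
  rw [Ioi_zero_eq_iUnion_Ioc_two_zpow]
  exact integrableOn_iUnion_of_summable_integral_norm hint
    (by simpa only [hnorm] using hβ.abs)

lemma integral_phiOf {a : ℝ} (hβ : HasSum (levelMass k) a) : ∫ s in Ioi 0, phiOf k s = a := by
  have hsum := hasSum_integral_iUnion (fun _ => measurableSet_Ioc)
    pairwise_disjoint_Ioc_two_zpow
    (Ioi_zero_eq_iUnion_Ioc_two_zpow ▸ integrableOn_phiOf hβ.summable)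
  rw [Ioi_zero_eq_iUnion_Ioc_two_zpow]
  refine hsum.unique (hβ.congr_fun fun m => ?_)
  exact setIntegral_eq_mul_of_eqOn_const measurableSet_Ioc (zpow_pos two_pos _).le
    (volume_Ioc_two_zpow m) (eqOn_phiOf_Ioc_two_zpow hβ.summable m)

end Profile

theorem kernel_alpha_phi_general (K : ℝ → ℝ → ℝ) (k : ℤ → ℝ)
    (x₀ : ℝ) (hx₀ : 0 ≤ x₀)
    (hKnorm : (∫ y in Set.Ici (0:ℝ), K x₀ y) = 1)
    (hk : ∀ (j : ℤ) (x y : ℝ), 0 ≤ x → 0 ≤ y → dyadicDist x y = (2:ℝ) ^ j → K x y = k j) :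
    Summable (fun l : ℤ => |alphaOf k l|) ∧
      HasSum (alphaOf k) 1 ∧
      (∀ x y : ℝ, 0 ≤ x → 0 ≤ y → x ≠ y → phiOf k (dyadicDist x y) = K x y) ∧
      MeasureTheory.IntegrableOn (phiOf k) (Set.Ioi (0:ℝ)) ∧
      (∫ s in Set.Ioi (0:ℝ), phiOf k s) = 1 := by
  have hβ : HasSum (levelMass k) 1 := hasSum_levelMass hx₀ hKnorm hk
  have hα : HasSum (alphaOf k) 1 := hasSum_alphaOf hβ
  refine ⟨hα.summable.abs, hα, fun x y hx hy hxy => ?_, integrableOn_phiOf hβ.summable,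
    integral_phiOf hβ⟩
  obtain ⟨m, hm⟩ := exists_dyadicDist_eq_zpow hx hy hxy
  rw [hm, hk m x y hx hy hm]
  exact eqOn_phiOf_Ioc_two_zpow hβ.summable m
    ⟨zpow_lt_zpow_right₀ one_lt_two (sub_one_lt m), le_rfl⟩

/-- Lemma 3 (2): for `K ∈ 𝒦` with level values `k_j`, the sequence
`α_l = 2^{-l}(k_{-l} - k_{-l+1})` is absolutely summable with sum `1`, and the profile
`φ(s) = Σ_l α_l 2^l χ_{(0,2^{-l}]}(s)` represents `K` (`φ(δ(x,y)) = K(x,y)`), is absolutely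
integrable on `(0,∞)`, and has integral `1`. -/
theorem kernel_alpha_phi (K : ℝ → ℝ → ℝ) (k : ℤ → ℝ)
    (hK0 : ∀ x y : ℝ, 0 ≤ x → 0 ≤ y → 0 ≤ K x y)
    (hKdist : ∀ x y x' y' : ℝ, 0 ≤ x → 0 ≤ y → 0 ≤ x' → 0 ≤ y' →
      dyadicDist x y = dyadicDist x' y' → K x y = K x' y')
    (x₀ : ℝ) (hx₀ : 0 ≤ x₀)
    (hKnorm : (∫ y in Set.Ici (0:ℝ), K x₀ y) = 1)
    (hk : ∀ (j : ℤ) (x y : ℝ), 0 ≤ x → 0 ≤ y → dyadicDist x y = (2:ℝ) ^ j → K x y = k j) :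
    Summable (fun l : ℤ => |alphaOf k l|) ∧
      HasSum (alphaOf k) 1 ∧
      (∀ x y : ℝ, 0 ≤ x → 0 ≤ y → x ≠ y → phiOf k (dyadicDist x y) = K x y) ∧
      MeasureTheory.IntegrableOn (phiOf k) (Set.Ioi (0:ℝ)) ∧
      (∫ s in Set.Ioi (0:ℝ), phiOf k s) = 1 :=
  kernel_alpha_phi_general K k x₀ hx₀ hKnorm hk
end

section
/- Let K ∈ 𝒦 and 1 ≤ p ≤ ∞. For every f ∈ Lᵖ(ℝ⁺), the integral ∫_{ℝ⁺} K(x,y) f(y) dy converges absolutely for almost every x ∈ ℝ⁺, and the operator Tf(x) = ∫_{ℝ⁺} K(x,y) f(y) dy is non-expansive on Lᵖ(ℝ⁺): ‖Tf‖_p ≤ ‖f‖_p. -/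
/-!
Off the diagonal, `K x y` depends only on the level `j` at which `δ(x, y) = 2^{-j}`, and the
points `y` at level `j` from `x` form the difference of two nested dyadic intervals, of measure
`2^{-(j+1)}` whatever `x` is. Hence every row integral `∫ K(x, y) dy` equals the one at `x₀`,
namely `1`, and by the symmetry of `δ` so does every column integral. Schur's test then applies:
for `p = ∞` this is immediate, and for `p < ∞` Jensen's inequality for the sub-probability
weight `K(x, ·)` followed by Tonelli gives `∫ (∫ K(x, y) |f y| dy)^p dx ≤ ∫ |f|^p`.
-/

open MeasureTheory Set Filter
open scoped ENNReal

section SchurTest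

variable {α β : Type*} [MeasurableSpace α] [MeasurableSpace β]

theorem rpow_lintegral_le_lintegral_rpow {μ : Measure α} (hμ : μ univ ≤ 1) {F : α → ℝ≥0∞}
    (hF : AEMeasurable F μ) {r : ℝ} (hr : 1 ≤ r) :
    (∫⁻ a, F a ∂μ) ^ r ≤ ∫⁻ a, F a ^ r ∂μ := by
  have hr0 : 0 < r := by linarith
  have h := eLpNorm_le_eLpNorm_mul_rpow_measure_univ (p := 1) (q := ENNReal.ofReal r)
    (by simpa using hr) hF.aestronglyMeasurable
  rw [eLpNorm_one_eq_lintegral_enorm, eLpNorm_eq_lintegral_rpow_enorm_toReal (by simp; linarith)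
    ENNReal.ofReal_ne_top, ENNReal.toReal_ofReal hr0.le] at h
  simp only [enorm_eq_self] at h
  have hμr : μ univ ^ (1 / (1 : ℝ≥0∞).toReal - 1 / r) ≤ 1 :=
    ENNReal.rpow_le_one hμ (by simp; exact inv_le_one_of_one_le₀ hr)
  calc (∫⁻ a, F a ∂μ) ^ r ≤ ((∫⁻ a, F a ^ r ∂μ) ^ (1 / r)) ^ r := by
        gcongr; exact h.trans (mul_le_of_le_one_right' hμr)
    _ = ∫⁻ a, F a ^ r ∂μ := by rw [one_div, ENNReal.rpow_inv_rpow hr0.ne']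

theorem rpow_lintegral_mul_le_lintegral_mul_rpow {μ : Measure α} {w F : α → ℝ≥0∞}
    (hw : AEMeasurable w μ) (hw_le : ∫⁻ a, w a ∂μ ≤ 1) (hF : AEMeasurable F μ) {r : ℝ}
    (hr : 1 ≤ r) :
    (∫⁻ a, w a * F a ∂μ) ^ r ≤ ∫⁻ a, w a * F a ^ r ∂μ := by
  have hac := withDensity_absolutelyContinuous μ w
  have h := rpow_lintegral_le_lintegral_rpow (μ := μ.withDensity w)
    (by rwa [withDensity_apply _ MeasurableSet.univ, setLIntegral_univ]) (hF.mono_ac hac) hr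
  rwa [lintegral_withDensity_eq_lintegral_mul₀ hw hF,
    lintegral_withDensity_eq_lintegral_mul₀ hw (hF.pow_const r)] at h

theorem eLpNorm_lintegral_mul_le {μ : Measure α} {ν : Measure β} [SFinite μ] [SFinite ν]
    {κ : α → β → ℝ≥0∞} (hκ : Measurable (Function.uncurry κ))
    (hrow : ∀ᵐ x ∂μ, ∫⁻ y, κ x y ∂ν ≤ 1) (hcol : ∀ᵐ y ∂ν, ∫⁻ x, κ x y ∂μ ≤ 1)
    {F : β → ℝ≥0∞} (hF : AEMeasurable F ν) {p : ℝ≥0∞} (hp : 1 ≤ p) :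
    eLpNorm (fun x => ∫⁻ y, κ x y * F y ∂ν) p μ ≤ eLpNorm F p ν := by
  rcases eq_or_ne p ∞ with rfl | hp_top
  · simp only [eLpNorm_exponent_top]
    refine eLpNormEssSup_le_of_ae_enorm_bound ?_
    filter_upwards [hrow] with x hx
    calc ∫⁻ y, κ x y * F y ∂ν ≤ ∫⁻ y, κ x y * eLpNormEssSup F ν ∂ν := by
          refine lintegral_mono_ae ?_
          filter_upwards [ae_le_eLpNormEssSup (f := F)] with y hy
          exact mul_le_mul_right hy _
      _ = (∫⁻ y, κ x y ∂ν) * eLpNormEssSup F ν :=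
          lintegral_mul_const _ (hκ.comp measurable_prodMk_left)
      _ ≤ eLpNormEssSup F ν := mul_le_of_le_one_left' hx
  have hp0 : p ≠ 0 := (zero_lt_one.trans_le hp).ne'
  set r := p.toReal
  have hr : 1 ≤ r := by simpa using ENNReal.toReal_mono hp_top hp
  rw [eLpNorm_eq_lintegral_rpow_enorm_toReal hp0 hp_top,
    eLpNorm_eq_lintegral_rpow_enorm_toReal hp0 hp_top]
  simp only [enorm_eq_self]
  gcongr
  calc ∫⁻ x, (∫⁻ y, κ x y * F y ∂ν) ^ r ∂μ ≤ ∫⁻ x, ∫⁻ y, κ x y * F y ^ r ∂ν ∂μ := by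
        refine lintegral_mono_ae ?_
        filter_upwards [hrow] with x hx
        exact rpow_lintegral_mul_le_lintegral_mul_rpow
          (hκ.comp measurable_prodMk_left).aemeasurable hx hF hr
    _ = ∫⁻ y, (∫⁻ x, κ x y ∂μ) * F y ^ r ∂ν := by
        rw [lintegral_lintegral_swap]
        · exact lintegral_congr fun y => lintegral_mul_const _ (hκ.comp measurable_prodMk_right)
        · exact hκ.aemeasurable.mul ((hF.pow_const r).comp_snd)
    _ ≤ ∫⁻ y, F y ^ r ∂ν := by
        refine lintegral_mono_ae ?_
        filter_upwards [hcol] with y hy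
        exact mul_le_of_le_one_left' hy

theorem ae_lt_top_of_eLpNorm_lt_top {μ : Measure α} {f : α → ℝ≥0∞} (hf : AEMeasurable f μ)
    {p : ℝ≥0∞} (hp : p ≠ 0) (h : eLpNorm f p μ < ∞) : ∀ᵐ x ∂μ, f x < ∞ := by
  rcases eq_or_ne p ∞ with rfl | hp_top
  · rw [eLpNorm_exponent_top] at h
    filter_upwards [ae_le_eLpNormEssSup (f := f)] with x hx
    exact hx.trans_lt h
  · have hr : 0 < p.toReal := ENNReal.toReal_pos hp hp_top
    rw [eLpNorm_lt_top_iff_lintegral_rpow_enorm_lt_top hp hp_top] at h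
    filter_upwards [ae_lt_top' (hf.pow_const _) h.ne] with x hx
    exact (ENNReal.rpow_lt_top_iff_of_pos hr).mp hx

end SchurTest

/-- `x` and `y` lie in the same dyadic interval of length `2^{-j}`. -/
def SameDyadicCell (j : ℤ) (x y : ℝ) : Prop := ⌊x * 2 ^ j⌋ = ⌊y * 2 ^ j⌋

def dyadicShell (j : ℤ) (x : ℝ) : Set ℝ :=
  {y | SameDyadicCell j x y ∧ ¬ SameDyadicCell (j + 1) x y}

section Dyadic

variable {i j : ℤ} {x y : ℝ}

theorem mem_Ico_zpow_iff_floor_eq {k : ℤ} :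
    x ∈ Ico (k * (2:ℝ) ^ (-j)) ((k + 1) * (2:ℝ) ^ (-j)) ↔ ⌊x * 2 ^ j⌋ = k := by
  have h2 : (0:ℝ) < 2 ^ j := by positivity
  rw [Int.floor_eq_iff, mem_Ico, zpow_neg, ← div_eq_mul_inv, ← div_eq_mul_inv, div_le_iff₀ h2,
    lt_div_iff₀ h2]

theorem SameDyadicCell.symm (h : SameDyadicCell j x y) : SameDyadicCell j y x := Eq.symm h

theorem SameDyadicCell.of_succ (h : SameDyadicCell (j + 1) x y) : SameDyadicCell j x y := by
  have halve : ∀ z : ℝ, z * 2 ^ j = z * 2 ^ (j + 1) / (2 : ℕ) := fun z => by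
    rw [zpow_add_one₀ two_ne_zero]; push_cast; ring
  unfold SameDyadicCell at *
  rw [halve x, halve y, Int.floor_div_natCast, Int.floor_div_natCast, h]

theorem SameDyadicCell.mono (hij : i ≤ j) (h : SameDyadicCell j x y) : SameDyadicCell i x y := by
  induction j, hij using Int.leInduction with
  | base => exact h
  | succ j _ ih => exact ih h.of_succ

theorem SameDyadicCell.abs_sub_mul_lt_one (h : SameDyadicCell j x y) : |x - y| * 2 ^ j < 1 := by
  have := Int.abs_sub_lt_one_of_floor_eq_floor h
  rwa [← sub_mul, abs_mul, abs_of_pos (by positivity : (0:ℝ) < 2 ^ j)] at this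

theorem SameDyadicCell.notMem_dyadicShell (hij : i < j) (h : SameDyadicCell j x y) :
    y ∉ dyadicShell i x := fun hy => hy.2 (h.mono hij)

theorem exists_sameDyadicCell (hx : 0 ≤ x) (hy : 0 ≤ y) : ∃ j, SameDyadicCell j x y := by
  obtain ⟨n, hn⟩ := pow_unbounded_of_one_lt (max x y) one_lt_two
  have floor_eq_zero : ∀ z : ℝ, 0 ≤ z → z ≤ max x y → ⌊z * 2 ^ (-(n : ℤ))⌋ = 0 :=
    fun z hz hzm => by
      rw [Int.floor_eq_zero_iff, zpow_neg, zpow_natCast, ← div_eq_mul_inv]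
      exact ⟨by positivity, (div_lt_one (by positivity)).mpr (hzm.trans_lt hn)⟩
  exact ⟨-n, (floor_eq_zero x hx (le_max_left x y)).trans
    (floor_eq_zero y hy (le_max_right x y)).symm⟩

theorem exists_not_sameDyadicCell (hxy : x ≠ y) : ∃ j, ¬ SameDyadicCell j x y := by
  have hpos : 0 < |x - y| := abs_pos.mpr (sub_ne_zero.mpr hxy)
  obtain ⟨n, hn⟩ := pow_unbounded_of_one_lt (|x - y|⁻¹) one_lt_two
  refine ⟨n, fun h => ?_⟩
  have := h.abs_sub_mul_lt_one
  rw [zpow_natCast] at this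
  rw [inv_lt_iff_one_lt_mul₀ hpos] at hn
  linarith

theorem exists_mem_dyadicShell (hx : 0 ≤ x) (hy : 0 ≤ y) (hxy : x ≠ y) :
    ∃ j, y ∈ dyadicShell j x := by
  obtain ⟨N, hN⟩ := exists_not_sameDyadicCell hxy
  obtain ⟨j, hj, hmax⟩ := Int.exists_greatest_of_bdd
    ⟨N, fun i hi => not_lt.mp fun hlt => hN (hi.mono hlt.le)⟩ (exists_sameDyadicCell hx hy)
  exact ⟨j, hj, fun h => (hmax _ h).not_gt (lt_add_one j)⟩

theorem eq_of_mem_dyadicShell (hi : y ∈ dyadicShell i x) (hj : y ∈ dyadicShell j x) : i = j := by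
  rcases lt_trichotomy i j with h | h | h
  · exact absurd hi (hj.1.notMem_dyadicShell h)
  · exact h
  · exact absurd hj (hi.1.notMem_dyadicShell h)

theorem mem_dyadicShell_comm : y ∈ dyadicShell j x ↔ x ∈ dyadicShell j y :=
  ⟨fun h => ⟨h.1.symm, fun h' => h.2 h'.symm⟩, fun h => ⟨h.1.symm, fun h' => h.2 h'.symm⟩⟩

theorem dyadicDist_eq_of_mem_dyadicShell (hx : 0 ≤ x) (h : y ∈ dyadicShell j x) :
    dyadicDist x y = 2 ^ (-j) := by
  have hxy : x ≠ y := by rintro rfl; exact h.2 rfl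
  rw [dyadicDist, if_neg hxy]
  refine IsLeast.csInf_eq ⟨⟨j, ⌊x * 2 ^ j⌋.toNat, rfl, ?_⟩, ?_⟩
  · have hk : ((⌊x * 2 ^ j⌋.toNat : ℕ) : ℝ) = ((⌊x * 2 ^ j⌋ : ℤ) : ℝ) := by
      exact_mod_cast Int.toNat_of_nonneg (Int.floor_nonneg.mpr (by positivity))
    rw [hk]
    exact ⟨mem_Ico_zpow_iff_floor_eq.mpr rfl, mem_Ico_zpow_iff_floor_eq.mpr h.1.symm⟩
  · rintro _ ⟨i, k, rfl, hxk, hyk⟩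
    rw [← Int.cast_natCast k] at hxk hyk
    have hi : SameDyadicCell i x y :=
      (mem_Ico_zpow_iff_floor_eq.mp hxk).trans (mem_Ico_zpow_iff_floor_eq.mp hyk).symm
    have hij : i ≤ j := not_lt.mp fun hlt => hi.notMem_dyadicShell hlt h
    exact zpow_le_zpow_right₀ one_le_two (neg_le_neg hij)

theorem zpow_mem_dyadicShell_zero (j : ℤ) : (2:ℝ) ^ (-(j + 1)) ∈ dyadicShell j 0 := by
  simp only [dyadicShell, SameDyadicCell, mem_ofPred_eq, zero_mul, Int.floor_zero]
  rw [← zpow_add₀ two_ne_zero, ← zpow_add₀ two_ne_zero, neg_add_cancel, zpow_zero, Int.floor_one]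
  refine ⟨?_, zero_ne_one⟩
  rw [show -(j + 1) + j = -1 by ring, eq_comm, Int.floor_eq_zero_iff]
  norm_num

theorem setOf_sameDyadicCell_eq_Ico (j : ℤ) (x : ℝ) :
    {y | SameDyadicCell j x y} =
      Ico (⌊x * 2 ^ j⌋ * (2:ℝ) ^ (-j)) ((⌊x * 2 ^ j⌋ + 1) * (2:ℝ) ^ (-j)) := by
  ext y
  exact (mem_Ico_zpow_iff_floor_eq.trans eq_comm).symm

theorem volume_setOf_sameDyadicCell (j : ℤ) (x : ℝ) :
    volume {y | SameDyadicCell j x y} = ENNReal.ofReal (2 ^ (-j)) := by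
  rw [setOf_sameDyadicCell_eq_Ico, Real.volume_Ico]
  ring_nf

theorem dyadicShell_eq_diff (j : ℤ) (x : ℝ) :
    dyadicShell j x = {y | SameDyadicCell j x y} \ {y | SameDyadicCell (j + 1) x y} := rfl

theorem measurableSet_dyadicShell (j : ℤ) (x : ℝ) : MeasurableSet (dyadicShell j x) := by
  rw [dyadicShell_eq_diff, setOf_sameDyadicCell_eq_Ico, setOf_sameDyadicCell_eq_Ico]
  exact measurableSet_Ico.diff measurableSet_Ico

theorem volume_dyadicShell (j : ℤ) (x : ℝ) :
    volume (dyadicShell j x) = ENNReal.ofReal (2 ^ (-(j + 1))) := by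
  have hsub : {y | SameDyadicCell (j + 1) x y} ⊆ {y | SameDyadicCell j x y} :=
    fun _ hy => SameDyadicCell.of_succ hy
  rw [dyadicShell_eq_diff, measure_sdiff hsub
    (by rw [setOf_sameDyadicCell_eq_Ico]; exact measurableSet_Ico.nullMeasurableSet)
    (by rw [volume_setOf_sameDyadicCell]; exact ENNReal.ofReal_ne_top),
    volume_setOf_sameDyadicCell, volume_setOf_sameDyadicCell,
    ← ENNReal.ofReal_sub _ (by positivity)]
  congr 1
  rw [neg_add, zpow_add₀ two_ne_zero]
  ring

theorem dyadicShell_subset_Ici (hx : 0 ≤ x) : dyadicShell j x ⊆ Ici 0 := fun y hy => by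
  have : 0 ≤ ⌊y * 2 ^ j⌋ := hy.1 ▸ Int.floor_nonneg.mpr (by positivity)
  exact nonneg_of_mul_nonneg_left (Int.floor_nonneg.mp this) (by positivity)

theorem measurableSet_setOf_mem_dyadicShell (j : ℤ) :
    MeasurableSet {p : ℝ × ℝ | p.2 ∈ dyadicShell j p.1} := by
  have hsame : ∀ i : ℤ, MeasurableSet {p : ℝ × ℝ | SameDyadicCell i p.1 p.2} := fun i =>
    measurableSet_eq_fun (measurable_fst.mul_const _).floor (measurable_snd.mul_const _).floor
  exact (hsame j).diff (hsame (j + 1))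

end Dyadic

/-- The kernel with value `c j` at dyadic distance `2^{-j}` and `0` on the diagonal; unlike an
arbitrary kernel depending only on `δ`, it is jointly measurable. -/
noncomputable def levelKernel (c : ℤ → ℝ≥0∞) (x y : ℝ) : ℝ≥0∞ :=
  ∑' j, (dyadicShell j x).indicator (fun _ => c j) y

section LevelKernel

variable (c : ℤ → ℝ≥0∞)

theorem measurable_levelKernel : Measurable (Function.uncurry (levelKernel c)) :=
  Measurable.tsum fun j => measurable_const.indicator (measurableSet_setOf_mem_dyadicShell j)

theorem levelKernel_comm (x y : ℝ) : levelKernel c x y = levelKernel c y x := by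
  refine tsum_congr fun j => ?_
  by_cases h : y ∈ dyadicShell j x
  · rw [indicator_of_mem h, indicator_of_mem (mem_dyadicShell_comm.mp h)]
  · rw [indicator_of_notMem h, indicator_of_notMem (mt mem_dyadicShell_comm.mpr h)]

theorem levelKernel_of_mem_dyadicShell {j : ℤ} {x y : ℝ} (h : y ∈ dyadicShell j x) :
    levelKernel c x y = c j := by
  rw [levelKernel, tsum_eq_single j fun i hi =>
    indicator_of_notMem (fun hi' => hi (eq_of_mem_dyadicShell hi' h)) _, indicator_of_mem h]

theorem setLIntegral_levelKernel {x : ℝ} (hx : 0 ≤ x) :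
    ∫⁻ y in Ici 0, levelKernel c x y = ∑' j, c j * ENNReal.ofReal (2 ^ (-(j + 1))) := by
  unfold levelKernel
  rw [lintegral_tsum fun j =>
    (measurable_const.indicator (measurableSet_dyadicShell j x)).aemeasurable]
  refine tsum_congr fun j => ?_
  rw [lintegral_indicator_const (measurableSet_dyadicShell j x),
    Measure.restrict_apply (measurableSet_dyadicShell j x),
    inter_eq_left.mpr (dyadicShell_subset_Ici hx), volume_dyadicShell]

end LevelKernel

def DependsOnDyadicDist (K : ℝ → ℝ → ℝ) : Prop :=
  ∀ x y x' y' : ℝ, 0 ≤ x → 0 ≤ y → 0 ≤ x' → 0 ≤ y' →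
    dyadicDist x y = dyadicDist x' y' → K x y = K x' y'

/-- The value of `K` at dyadic distance `2^{-j}`, read off at the pair `(0, 2^{-(j+1)})`. -/
noncomputable def dyadicProfile (K : ℝ → ℝ → ℝ) (j : ℤ) : ℝ≥0∞ :=
  ENNReal.ofReal (K 0 (2 ^ (-(j + 1))))

namespace DependsOnDyadicDist

variable {K : ℝ → ℝ → ℝ} {x : ℝ}

theorem levelKernel_dyadicProfile (hK : DependsOnDyadicDist K) {y : ℝ} (hx : 0 ≤ x)
    (hy : 0 ≤ y) (hxy : x ≠ y) :
    levelKernel (dyadicProfile K) x y = ENNReal.ofReal (K x y) := by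
  obtain ⟨j, hj⟩ := exists_mem_dyadicShell hx hy hxy
  have hdist : dyadicDist x y = dyadicDist 0 (2 ^ (-(j + 1))) := by
    rw [dyadicDist_eq_of_mem_dyadicShell hx hj,
      dyadicDist_eq_of_mem_dyadicShell le_rfl (zpow_mem_dyadicShell_zero j)]
  rw [levelKernel_of_mem_dyadicShell _ hj, dyadicProfile,
    hK x y 0 _ hx hy le_rfl (by positivity) hdist]

theorem ae_levelKernel_dyadicProfile (hK : DependsOnDyadicDist K) (hx : 0 ≤ x) :
    ∀ᵐ y ∂volume.restrict (Ici 0),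
      levelKernel (dyadicProfile K) x y = ENNReal.ofReal (K x y) := by
  filter_upwards [ae_restrict_mem measurableSet_Ici, compl_mem_ae_iff.mpr (measure_singleton x)]
    with y hy hyx
  exact hK.levelKernel_dyadicProfile hx hy (Ne.symm hyx)

theorem aestronglyMeasurable (hK : DependsOnDyadicDist K)
    (hK0 : ∀ x y : ℝ, 0 ≤ x → 0 ≤ y → 0 ≤ K x y) (hx : 0 ≤ x) :
    AEStronglyMeasurable (K x) (volume.restrict (Ici 0)) := by
  refine ((measurable_levelKernel (dyadicProfile K)).comp
    (measurable_prodMk_left (x := x))).ennreal_toReal.aestronglyMeasurable.congr ?_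
  filter_upwards [hK.ae_levelKernel_dyadicProfile hx, ae_restrict_mem measurableSet_Ici]
    with y hy hy0
  simp only [Function.comp_apply, Function.uncurry_apply_pair, hy,
    ENNReal.toReal_ofReal (hK0 x y hx hy0)]

/-- The row integral of the level kernel does not depend on `x`, so it is the one at `x₀`. -/
theorem setLIntegral_levelKernel_dyadicProfile (hK : DependsOnDyadicDist K)
    (hK0 : ∀ x y : ℝ, 0 ≤ x → 0 ≤ y → 0 ≤ K x y) {x₀ : ℝ} (hx₀ : 0 ≤ x₀)
    (hKnorm : (∫ y in Ici (0:ℝ), K x₀ y) = 1) (hx : 0 ≤ x) :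
    ∫⁻ y in Ici 0, levelKernel (dyadicProfile K) x y = 1 := by
  rw [setLIntegral_levelKernel _ hx, ← setLIntegral_levelKernel _ hx₀,
    lintegral_congr_ae (hK.ae_levelKernel_dyadicProfile hx₀)]
  have hnonneg : 0 ≤ᵐ[volume.restrict (Ici 0)] K x₀ := by
    filter_upwards [ae_restrict_mem measurableSet_Ici] with y hy using hK0 x₀ y hx₀ hy
  have h := integral_eq_lintegral_of_nonneg_ae hnonneg (hK.aestronglyMeasurable hK0 hx₀)
  rw [hKnorm] at h
  exact (ENNReal.toReal_eq_one_iff _).mp h.symm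

end DependsOnDyadicDist

/-- Lemma 5: for `K ∈ 𝒦` and `f ∈ Lᵖ(ℝ⁺)`, `1 ≤ p ≤ ∞`, the integral `∫ K(x,y) f(y) dy`
converges absolutely for almost every `x ∈ ℝ⁺`, and `Tf(x) = ∫ K(x,y) f(y) dy` is
non-expansive: `‖Tf‖_p ≤ ‖f‖_p`. -/
theorem kernel_operator_nonexpansive (K : ℝ → ℝ → ℝ)
    (hK0 : ∀ x y : ℝ, 0 ≤ x → 0 ≤ y → 0 ≤ K x y)
    (hKdist : ∀ x y x' y' : ℝ, 0 ≤ x → 0 ≤ y → 0 ≤ x' → 0 ≤ y' →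
      dyadicDist x y = dyadicDist x' y' → K x y = K x' y')
    (x₀ : ℝ) (hx₀ : 0 ≤ x₀)
    (hKnorm : (∫ y in Set.Ici (0:ℝ), K x₀ y) = 1)
    (p : ℝ≥0∞) (hp : 1 ≤ p) (f : ℝ → ℝ)
    (hf : MeasureTheory.MemLp f p (MeasureTheory.volume.restrict (Set.Ici (0:ℝ)))) :
    (∀ᵐ x ∂(MeasureTheory.volume.restrict (Set.Ici (0:ℝ))),
        MeasureTheory.Integrable (fun y => K x y * f y)
          (MeasureTheory.volume.restrict (Set.Ici (0:ℝ)))) ∧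
      MeasureTheory.eLpNorm
          (fun x => ∫ y in Set.Ici (0:ℝ), K x y * f y) p
          (MeasureTheory.volume.restrict (Set.Ici (0:ℝ))) ≤
        MeasureTheory.eLpNorm f p (MeasureTheory.volume.restrict (Set.Ici (0:ℝ))) := by
  have hK : DependsOnDyadicDist K := hKdist
  set μ := volume.restrict (Ici (0:ℝ))
  set κ := levelKernel (dyadicProfile K)
  have hκ : Measurable (Function.uncurry κ) := measurable_levelKernel _
  have hrow : ∀ᵐ x ∂μ, ∫⁻ y, κ x y ∂μ ≤ 1 := by
    filter_upwards [ae_restrict_mem measurableSet_Ici] with x hx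
    exact (hK.setLIntegral_levelKernel_dyadicProfile hK0 hx₀ hKnorm hx).le
  have hcol : ∀ᵐ y ∂μ, ∫⁻ x, κ x y ∂μ ≤ 1 :=
    hrow.mono fun y hy => (lintegral_congr fun x => levelKernel_comm _ x y).trans_le hy
  set G := fun x => ∫⁻ y, κ x y * ‖f y‖ₑ ∂μ
  have hG : eLpNorm G p μ ≤ eLpNorm f p μ :=
    (eLpNorm_lintegral_mul_le hκ hrow hcol hf.1.enorm hp).trans_eq (eLpNorm_enorm f)
  have hG_fin : ∀ᵐ x ∂μ, G x < ∞ :=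
    ae_lt_top_of_eLpNorm_lt_top (hκ.aemeasurable.mul hf.1.enorm.comp_snd).lintegral_prod_right'
      (zero_lt_one.trans_le hp).ne' (hG.trans_lt hf.2)
  have hG_eq : ∀ᵐ x ∂μ, ∫⁻ y, ‖K x y * f y‖ₑ ∂μ = G x := by
    filter_upwards [ae_restrict_mem measurableSet_Ici] with x hx
    refine lintegral_congr_ae ?_
    filter_upwards [hK.ae_levelKernel_dyadicProfile hx, ae_restrict_mem measurableSet_Ici]
      with y hy hy0
    rw [enorm_mul, Real.enorm_eq_ofReal (hK0 x y hx hy0), ← hy]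
  refine ⟨?_, ?_⟩
  · filter_upwards [hG_eq, hG_fin, ae_restrict_mem measurableSet_Ici] with x hx hfin hx0
    exact ⟨(hK.aestronglyMeasurable hK0 hx0).mul hf.1, hx.trans_lt hfin⟩
  · refine (eLpNorm_mono_enorm_ae ?_).trans hG
    filter_upwards [hG_eq] with x hx
    exact (enorm_integral_le_lintegral_enorm _).trans hx.le
end
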